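/- Let G be a nilpotent group of class at most c+1 with generating set g₁,...,g_m. Let H be the intersection over all sequences 1 ≤ i₁,...,i_c ≤ m of the kernels of the maps φ_{i₁,...,i_c} : G → γ_c(G), g ↦ [[[...[[g_{i₁},g_{i₂}],g_{i₃}],...],g_{i_c}],g]. Then H is nilpotent of class at most c. -/

import Mathlib

/-!
Let `W_k` be the set of left-normed commutators of weight `k + 1` in the generators. As
`W_k ⊆ γ_k(G)` is central modulo `γ_{k+1}(G)`, the product `⟨W_k⟩ γ_{k+1}(G)` is normal, and
for a normal `N` one has `⁅⟨A⟩, ⟨B⟩⁆ ≤ N` as soon as all `⁅a, b⁆ ∈ N`; by induction this gives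
`γ_k(G) ≤ ⟨W_k⟩ γ_{k+1}(G)`. For `k = c - 1` the factor `γ_c(G)` is central, so every element of
`H`, commuting with `W_{c-1}` by definition, centralizes `γ_{c-1}(G) ⊇ γ_{c-1}(H)`, whence
`γ_c(H) = ⁅γ_{c-1}(H), H⁆ = 1`.
-/

open scoped commutatorElement

/-- The left-normed iterated commutator of a list of group elements:
`iterComm [g₁, g₂, …, g_k] = [[…[[g₁,g₂],g₃]…],g_k]`. -/
def iterComm {G : Type*} [Group G] : List G → G
  | [] => 1
  | a :: l => l.foldl (fun x y => ⁅x, y⁆) a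

section

open Subgroup

variable {G : Type*} [Group G]

theorem QuotientGroup.commute_mk_of_commutatorElement_mem {N : Subgroup G} [N.Normal] {a b : G}
    (h : ⁅a, b⁆ ∈ N) : Commute (a : G ⧸ N) b := by
  have h' := (QuotientGroup.eq_one_iff _).mpr h
  rw [← QuotientGroup.mk'_apply, map_commutatorElement] at h'
  exact commutatorElement_eq_one_iff_commute.mp h'

namespace Subgroup

theorem commutator_closure_le {A B : Set G} {N : Subgroup G} [N.Normal]
    (h : ∀ a ∈ A, ∀ b ∈ B, ⁅a, b⁆ ∈ N) : ⁅closure A, closure B⁆ ≤ N := by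
  rw [← QuotientGroup.ker_mk' N, ← map_eq_bot_iff, map_commutator, MonoidHom.map_closure,
    MonoidHom.map_closure, commutator_eq_bot_iff_le_centralizer, centralizer_closure, closure_le]
  rintro _ ⟨a, ha, rfl⟩ _ ⟨b, hb, rfl⟩
  exact (QuotientGroup.commute_mk_of_commutatorElement_mem (h a ha b hb)).eq.symm

theorem normal_closure_sup_of_commutator_mem {A : Set G} {Z : Subgroup G} [Z.Normal]
    (h : ∀ a ∈ A, ∀ g, ⁅a, g⁆ ∈ Z) : (closure A ⊔ Z).Normal := by
  have hcenter : (closure A).map (QuotientGroup.mk' Z) ≤ center (G ⧸ Z) := by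
    rw [MonoidHom.map_closure, closure_le]
    rintro _ ⟨a, ha, rfl⟩
    refine mem_center_iff.mpr fun g => ?_
    obtain ⟨g, rfl⟩ := QuotientGroup.mk_surjective g
    exact (QuotientGroup.commute_mk_of_commutatorElement_mem (h a ha g)).eq.symm
  rw [← QuotientGroup.ker_mk' Z, ← comap_map_eq]
  refine Normal.comap ⟨fun n hn g => ?_⟩ _
  rwa [mem_center_iff.mp (hcenter hn) g, mul_inv_cancel_right]

end Subgroup

/-- `leftNormedCommutators S k` consists of the commutators `⁅…⁅s₀, s₁⁆, …, s_k⁆` of weight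
`k + 1`, matching `γ_k` in the indexing `γ₀ = G`. -/
def leftNormedCommutators (S : Set G) : ℕ → Set G
  | 0 => S
  | k + 1 => Set.image2 (⁅·, ·⁆) (leftNormedCommutators S k) S

theorem leftNormedCommutators_subset_lowerCentralSeries (S : Set G) :
    ∀ k, leftNormedCommutators S k ⊆ (⊤ : Subgroup G).lowerCentralSeries k
  | 0 => fun _ _ => mem_top _
  | k + 1 => Set.image2_subset_iff.mpr fun _ ha b _ =>
      commutator_mem_commutator (leftNormedCommutators_subset_lowerCentralSeries S k ha) (mem_top b)

theorem lowerCentralSeries_le_closure_leftNormedCommutators_sup {S : Set G}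
    (hS : closure S = ⊤) (k : ℕ) :
    (⊤ : Subgroup G).lowerCentralSeries k ≤
      closure (leftNormedCommutators S k) ⊔ (⊤ : Subgroup G).lowerCentralSeries (k + 1) := by
  induction k with
  | zero => exact hS.ge.trans le_sup_left
  | succ k ih =>
    have : (closure (leftNormedCommutators S (k + 1)) ⊔
        (⊤ : Subgroup G).lowerCentralSeries (k + 2)).Normal :=
      normal_closure_sup_of_commutator_mem fun a ha g => commutator_mem_commutator
        (leftNormedCommutators_subset_lowerCentralSeries S (k + 1) ha) (mem_top g)
    calc (⊤ : Subgroup G).lowerCentralSeries (k + 1)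
        ≤ ⁅closure (leftNormedCommutators S k ∪ (⊤ : Subgroup G).lowerCentralSeries (k + 1)),
            closure S⁆ :=
          commutator_mono (by rwa [Subgroup.closure_union, closure_eq]) hS.ge
      _ ≤ _ := by
          refine commutator_closure_le ?_
          rintro a (ha | ha) b hb
          · exact mem_sup_left (subset_closure (Set.mem_image2_of_mem ha hb))
          · exact mem_sup_right (commutator_mem_commutator ha (mem_top b))

theorem lowerCentralSeries_le_centralizer {S : Set G} (hS : closure S = ⊤) {k : ℕ}
    (hG : (⊤ : Subgroup G).lowerCentralSeries (k + 1 + 1) = ⊥) {T : Set G}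
    (hT : ∀ w ∈ leftNormedCommutators S k, w ∈ centralizer T) :
    (⊤ : Subgroup G).lowerCentralSeries k ≤ centralizer T := by
  have hcentral : (⊤ : Subgroup G).lowerCentralSeries (k + 1) ≤ centralizer ⊤ :=
    commutator_eq_bot_iff_le_centralizer.mp hG
  exact (lowerCentralSeries_le_closure_leftNormedCommutators_sup hS k).trans
    (sup_le (closure_le _ |>.mpr hT) (hcentral.trans (centralizer_le le_top)))

theorem iterComm_append_singleton {l : List G} (hl : l ≠ []) (x : G) :
    iterComm (l ++ [x]) = ⁅iterComm l, x⁆ := by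
  obtain ⟨a, l, rfl⟩ := List.exists_cons_of_ne_nil hl
  simp [iterComm, List.foldl_append]

theorem leftNormedCommutators_range_subset {m : ℕ} (gs : Fin m → G) :
    ∀ k, leftNormedCommutators (Set.range gs) k ⊆
      Set.range fun i : Fin (k + 1) → Fin m => iterComm (List.ofFn (gs ∘ i))
  | 0 => by
    rintro _ ⟨j, rfl⟩
    exact ⟨fun _ => j, by simp [iterComm]⟩
  | k + 1 => by
    rintro _ ⟨_, hw, _, ⟨j, rfl⟩, rfl⟩
    obtain ⟨i, rfl⟩ := leftNormedCommutators_range_subset gs k hw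
    refine ⟨Fin.snoc i j, ?_⟩
    change iterComm (List.ofFn (gs ∘ Fin.snoc i j)) = ⁅iterComm (List.ofFn (gs ∘ i)), gs j⁆
    rw [List.ofFn_succ', List.concat_eq_append, iterComm_append_singleton (by simp)]
    simp

end

/-- Let `G` be a nilpotent group of class at most `c + 1` with generating set
`gs 0, …, gs (m-1)`.  Let `H` be the intersection, over all sequences
`i : Fin c → Fin m`, of the kernels of the maps
`φ_{i₁,…,i_c} : g ↦ [[[…[[g_{i₁},g_{i₂}],g_{i₃}]…],g_{i_c}], g]`
(i.e. `g ∈ H` iff all these iterated commutators vanish).  Then `H` is nilpotent of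
class at most `c`. -/
theorem kernel_intersection_nilpotent {G : Type*} [Group G] (c m : ℕ) (hc : 0 < c)
    (gs : Fin m → G) (hgen : Subgroup.closure (Set.range gs) = ⊤)
    (hG : (⊤ : Subgroup G).lowerCentralSeries (c + 1) = ⊥)
    (H : Subgroup G)
    (hH : ∀ g : G, g ∈ H ↔ ∀ i : Fin c → Fin m, ⁅iterComm (List.ofFn (gs ∘ i)), g⁆ = 1) :
    (⊤ : Subgroup H).lowerCentralSeries c = ⊥ := by
  obtain ⟨c, rfl⟩ := Nat.exists_eq_add_one.mpr hc
  have hcentralizer : (⊤ : Subgroup G).lowerCentralSeries c ≤ Subgroup.centralizer H := by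
    refine lowerCentralSeries_le_centralizer hgen hG fun w hw => ?_
    obtain ⟨i, rfl⟩ := leftNormedCommutators_range_subset gs c hw
    exact Subgroup.mem_centralizer_iff.mpr fun g hg =>
      (commutatorElement_eq_one_iff_mul_comm.mp ((hH g).mp hg i)).symm
  rw [← Subgroup.map_eq_bot_iff_of_injective _ H.subtype_injective,
    Subgroup.top_subtype_lowerCentralSeries, Subgroup.lowerCentralSeries_succ,
    Subgroup.commutator_eq_bot_iff_le_centralizer]
  exact (Subgroup.lowerCentralSeries_mono c le_top).trans hcentralizer
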